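/- arXiv:1305.1821 — 4 statements merged into one kernel-verified Lean document; each statement's English description precedes it below -/
import Mathlib

section
/- Let (V, +, 0) and (V, ∘, Θ) be two elementary abelian p-group structures on the same finite set V such that every +-translation σ_y : x ↦ x + y lies in the affine group AGL(V, ∘, Θ). For y ∈ V let κ(y) ∈ GL(V, ∘, Θ) be defined by x + y − Θ = xκ(y) ∘ y for all x. Then κ(y + z − Θ) = κ(y)κ(z) for all y, z ∈ V; in particular the map y ↦ κ(y + Θ) is a group homomorphism from (V, +) to GL(V, ∘, Θ), and κ(V) is an abelian p-group. -/
/-- A second elementary abelian `p`-group structure `(V, ∘, Θ)` on the underlying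
set of a finite elementary abelian `p`-group `(V, +, 0)`. -/
structure ElemAbStruct (p : ℕ) (V : Type*) where
  circ : V → V → V
  theta : V
  opp : V → V
  assoc : ∀ a b c, circ (circ a b) c = circ a (circ b c)
  comm : ∀ a b, circ a b = circ b a
  theta_right : ∀ a, circ a theta = a
  opp_right : ∀ a, circ a (opp a) = theta
  elem : ∀ a, (circ a)^[p] theta = theta

/-!
Comparing the two ways of translating `x` by `y` and then by `z` gives
`κ(y + z - Θ)(x) ∘ (y + z - Θ) = κ(z)(κ(y)(x)) ∘ (y + z - Θ)`, using only that `κ(z)` is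
`∘`-additive and that `κ(z)(y) ∘ z = y + z - Θ`; cancelling in `(V, ∘)` yields the cocycle
identity. It says that `y ↦ κ(y + Θ)` is a monoid homomorphism from `(V, +)`, so commutativity
of `+` makes the `κ(y)` commute and `p • V = 0` makes them of order dividing `p`.
-/

namespace ElemAbStruct

variable {p : ℕ} {V : Type*} (S : ElemAbStruct p V)

theorem circ_right_cancel {a b c : V} (h : S.circ a c = S.circ b c) : a = b := by
  simpa only [S.assoc, S.opp_right, S.theta_right] using congrArg (S.circ · (S.opp c)) h

end ElemAbStruct

section Kappa

variable {p : ℕ} {V : Type*} [AddCommGroup V] (S : ElemAbStruct p V) {K : V → V → V}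

theorem kappa_theta (hKdef : ∀ x y, x + y - S.theta = S.circ (K y x) y) (x : V) :
    K S.theta x = x := by
  have h := hKdef x S.theta
  rw [S.theta_right, add_sub_cancel_right] at h
  exact h.symm

theorem kappa_add_sub_theta (hKlin : ∀ y a b, K y (S.circ a b) = S.circ (K y a) (K y b))
    (hKdef : ∀ x y, x + y - S.theta = S.circ (K y x) y) (y z x : V) :
    K (y + z - S.theta) x = K z (K y x) := by
  apply S.circ_right_cancel (c := y + z - S.theta)
  calc S.circ (K (y + z - S.theta) x) (y + z - S.theta)
      = (x + y - S.theta) + z - S.theta := by rw [← hKdef]; abel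
    _ = S.circ (K z (K y x)) (y + z - S.theta) := by
      rw [hKdef x y, hKdef _ z, hKlin, S.assoc, ← hKdef y z]

theorem kappa_comm (hKlin : ∀ y a b, K y (S.circ a b) = S.circ (K y a) (K y b))
    (hKdef : ∀ x y, x + y - S.theta = S.circ (K y x) y) (y z x : V) :
    K z (K y x) = K y (K z x) := by
  rw [← kappa_add_sub_theta S hKlin hKdef, ← kappa_add_sub_theta S hKlin hKdef, add_comm y z]

def kappaHom (hKlin : ∀ y a b, K y (S.circ a b) = S.circ (K y a) (K y b))
    (hKdef : ∀ x y, x + y - S.theta = S.circ (K y x) y) :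
    Multiplicative V →* Function.End V where
  toFun y := K (y.toAdd + S.theta)
  map_one' := funext fun x => by rw [toAdd_one, zero_add]; exact kappa_theta S hKdef x
  map_mul' a b := funext fun x => by
    -- `f * g = f ∘ g` in `Function.End`, while `κ(y + z - Θ) = κ(z) ∘ κ(y)`: hence the swap
    have h := kappa_add_sub_theta S hKlin hKdef (b.toAdd + S.theta) (a.toAdd + S.theta) x
    rwa [show b.toAdd + S.theta + (a.toAdd + S.theta) - S.theta = (a * b).toAdd + S.theta by
      rw [toAdd_mul]; abel] at h

theorem kappa_iterate_eq_self (helem : ∀ v : V, p • v = 0)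
    (hKlin : ∀ y a b, K y (S.circ a b) = S.circ (K y a) (K y b))
    (hKdef : ∀ x y, x + y - S.theta = S.circ (K y x) y) (y x : V) :
    (K y)^[p] x = x := by
  have hpow : kappaHom S hKlin hKdef (.ofAdd (y - S.theta)) ^ p = 1 := by
    rw [← map_pow, ← ofAdd_nsmul, helem, ofAdd_zero, map_one]
  have hx : (K (y - S.theta + S.theta))^[p] x = x := congrFun hpow x
  rwa [sub_add_cancel] at hx

end Kappa

theorem stmt11_general {p : ℕ} {V : Type*} [AddCommGroup V]
    (helem : ∀ v : V, p • v = 0) (S : ElemAbStruct p V)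
    (K : V → V → V)
    (hKlin : ∀ y a b, K y (S.circ a b) = S.circ (K y a) (K y b))
    (hKdef : ∀ x y, x + y - S.theta = S.circ (K y x) y) :
    (∀ y z x, K (y + z - S.theta) x = K z (K y x)) ∧
    (∀ y z x, K z (K y x) = K y (K z x)) ∧
    (∀ y x, (K y)^[p] x = x) :=
  ⟨kappa_add_sub_theta S hKlin hKdef, kappa_comm S hKlin hKdef,
    kappa_iterate_eq_self S helem hKlin hKdef⟩

/-- Suppose every `+`-translation of `V` is affine with respect to a second
elementary abelian `p`-group structure `(V, ∘, Θ)`, with `∘`-linear part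
`κ(y)` satisfying `x + y - Θ = xκ(y) ∘ y`. Then `κ(y + z - Θ) = κ(y)κ(z)`; in
particular `y ↦ κ(y + Θ)` is a homomorphism from `(V,+)` and `κ(V)` is an
abelian `p`-group (all its elements have order dividing `p`). -/
theorem stmt11 {p : ℕ} (hp : p.Prime) {V : Type*} [AddCommGroup V] [Fintype V]
    (helem : ∀ v : V, p • v = 0) (S : ElemAbStruct p V)
    (K : V → V → V)
    (hKbij : ∀ y, Function.Bijective (K y))
    (hKlin : ∀ y a b, K y (S.circ a b) = S.circ (K y a) (K y b))
    (hKdef : ∀ x y, x + y - S.theta = S.circ (K y x) y) :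
    (∀ y z x, K (y + z - S.theta) x = K z (K y x)) ∧
    (∀ y z x, K z (K y x) = K y (K z x)) ∧
    (∀ y x, (K y)^[p] x = x) :=
  stmt11_general helem S K hKlin hKdef
end

section
/- With two elementary abelian p-group structures (V,+,0) and (V,∘,Θ) on V such that every +-translation is ∘-affine, define κ(y) by x + y − Θ = xκ(y) ∘ y and write uκ(v) = u ∘ uδ(v), where δ(v) ∈ End(V,∘). Then yδ(z) = zδ(y) for all y, z ∈ V, and δ is ∘-additive: δ(v₁ ∘ v₂) = δ(v₁) ∘ δ(v₂). -/
theorem delta_symm_of_translation {p : ℕ} {V : Type*} [AddCommGroup V] (S : ElemAbStruct p V)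
    {K D : V → V → V} (hKdef : ∀ x y, x + y - S.theta = S.circ (K y x) y)
    (hKD : ∀ u v, K v u = S.circ u (D v u)) (y z : V) : D z y = D y z := by
  have expand : ∀ a b, a + b - S.theta = S.circ (D b a) (S.circ a b) := fun a b => by
    rw [hKdef, hKD, S.comm a, S.assoc]
  apply S.circ_right_cancel (c := S.circ y z)
  rw [← expand, S.comm y z, ← expand, add_comm]

theorem map_circ_left_of_symm {p : ℕ} {V : Type*} (S : ElemAbStruct p V) {D : V → V → V}
    (hsymm : ∀ y z, D z y = D y z) (hDend : ∀ v a b, D v (S.circ a b) = S.circ (D v a) (D v b))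
    (v₁ v₂ u : V) : D (S.circ v₁ v₂) u = S.circ (D v₁ u) (D v₂ u) := by
  rw [hsymm u, hDend, hsymm v₁, hsymm v₂]

/-- `D v u` stands for `uδ(v)` and `K y x` for `xκ(y)`. -/
theorem stmt13_general {p : ℕ} {V : Type*} [AddCommGroup V]
    (S : ElemAbStruct p V)
    (K : V → V → V)
    (hKdef : ∀ x y, x + y - S.theta = S.circ (K y x) y)
    (D : V → V → V)
    (hKD : ∀ u v, K v u = S.circ u (D v u))
    (hDend : ∀ v a b, D v (S.circ a b) = S.circ (D v a) (D v b)) :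
    (∀ y z, D z y = D y z) ∧
    (∀ v₁ v₂ u, D (S.circ v₁ v₂) u = S.circ (D v₁ u) (D v₂ u)) :=
  have hsymm := delta_symm_of_translation S hKdef hKD
  ⟨hsymm, map_circ_left_of_symm S hsymm hDend⟩

/-- With `κ(y)` the `∘`-linear part of the `+`-translation (so
`x + y - Θ = xκ(y) ∘ y`) and `δ(v)` the `∘`-endomorphism with
`uκ(v) = u ∘ uδ(v)`, one has `yδ(z) = zδ(y)` for all `y, z`, and `δ` is
`∘`-additive: `δ(v₁ ∘ v₂) = δ(v₁) ∘ δ(v₂)`.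
Here `D v u` denotes `uδ(v)` and `K y x` denotes `xκ(y)`. -/
theorem stmt13 {p : ℕ} (hp : p.Prime) {V : Type*} [AddCommGroup V] [Fintype V]
    (helem : ∀ v : V, p • v = 0) (S : ElemAbStruct p V)
    (K : V → V → V)
    (hKbij : ∀ y, Function.Bijective (K y))
    (hKlin : ∀ y a b, K y (S.circ a b) = S.circ (K y a) (K y b))
    (hKdef : ∀ x y, x + y - S.theta = S.circ (K y x) y)
    (D : V → V → V)
    (hKD : ∀ u v, K v u = S.circ u (D v u))
    (hDend : ∀ v a b, D v (S.circ a b) = S.circ (D v a) (D v b)) :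
    (∀ y z, D z y = D y z) ∧
    (∀ v₁ v₂ u, D (S.circ v₁ v₂) u = S.circ (D v₁ u) (D v₂ u)) :=
  stmt13_general S K hKdef D hKD hDend
end

section
/- In the setup above, fix u ∈ V and let W = uδ(V) = {uδ(v) : v ∈ V}. Then W is a ∘-subgroup of V, W is invariant under κ(z) for all z ∈ V, and the set {uκ(v) : v ∈ V} equals the ∘-coset u ∘ W. -/
/-!
Since `x + y - Θ = x ∘ xδ(y) ∘ y` is symmetric in `x` and `y`, one has `xδ(y) = yδ(x)`, so
`W = uδ(V)` is the image of the `∘`-endomorphism `δ(u)` and hence a `∘`-subgroup.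
Invariance under `κ(z)` comes from `wκ(z) = w ∘ wδ(z)` and the rule for `δ(v + z - Θ)`,
which give `(uδ(v))κ(z) = uδ(v + z - Θ) ∘ ⊖uδ(z)`.
-/

abbrev ElemAbStruct.toCommGroup {p : ℕ} {V : Type*} (S : ElemAbStruct p V) : CommGroup V where
  mul := S.circ
  one := S.theta
  inv := S.opp
  mul_assoc := S.assoc
  mul_comm := S.comm
  mul_one := S.theta_right
  one_mul a := (S.comm _ _).trans (S.theta_right a)
  inv_mul_cancel a := (S.comm _ _).trans (S.opp_right a)

section

variable {G : Type*} [AddCommMagma G] [Sub G] [CommGroup G] {K D : G → G → G}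

def deltaHom (hDend : ∀ v a b, D v (a * b) = D v a * D v b) (v : G) : G →* G :=
  MonoidHom.mk' (D v) (hDend v)

theorem delta_comm (hKdef : ∀ x y, x + y - 1 = K y x * y) (hKD : ∀ u v, K v u = u * D v u)
    (a b : G) : D a b = D b a := by
  have h := (hKdef b a).symm.trans (add_comm b a ▸ hKdef a b)
  rw [hKD, hKD, mul_right_comm, mul_right_comm a, mul_comm b a] at h
  exact mul_left_cancel h

theorem kappa_delta_eq (hKD : ∀ u v, K v u = u * D v u)
    (hDadd : ∀ v z u', D (v + z - 1) u' = D v u' * D z u' * D z (D v u')) (u v z : G) :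
    K z (D v u) = D (v + z - 1) u * (D z u)⁻¹ := by
  rw [hKD, hDadd, mul_right_comm (D v u), mul_inv_cancel_right]

theorem setOf_delta_eq_range (hKdef : ∀ x y, x + y - 1 = K y x * y)
    (hKD : ∀ u v, K v u = u * D v u) (hDend : ∀ v a b, D v (a * b) = D v a * D v b) (u : G) :
    {w : G | ∃ v, w = D v u} = (deltaHom hDend u).range := by
  ext w
  simp only [Set.mem_ofPred_eq, SetLike.mem_coe, MonoidHom.mem_range, deltaHom,
    MonoidHom.mk'_apply, delta_comm hKdef hKD u, eq_comm]

theorem kappa_mem_range_delta (hKdef : ∀ x y, x + y - 1 = K y x * y)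
    (hKD : ∀ u v, K v u = u * D v u) (hDend : ∀ v a b, D v (a * b) = D v a * D v b)
    (hDadd : ∀ v z u', D (v + z - 1) u' = D v u' * D z u' * D z (D v u')) (u z : G)
    {w : G} (hw : w ∈ (deltaHom hDend u).range) : K z w ∈ (deltaHom hDend u).range := by
  obtain ⟨v, rfl⟩ := hw
  refine ⟨(v + z - 1) * z⁻¹, ?_⟩
  simp only [deltaHom, MonoidHom.mk'_apply, map_mul, map_inv]
  rw [delta_comm hKdef hKD u v, kappa_delta_eq hKD hDadd, delta_comm hKdef hKD u,
    delta_comm hKdef hKD u]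

end

theorem stmt14_general {p : ℕ} {V : Type*} [AddCommGroup V]
    (S : ElemAbStruct p V)
    (K : V → V → V)
    (hKdef : ∀ x y, x + y - S.theta = S.circ (K y x) y)
    (D : V → V → V)
    (hKD : ∀ u v, K v u = S.circ u (D v u))
    (hDend : ∀ v a b, D v (S.circ a b) = S.circ (D v a) (D v b))
    (hDadd : ∀ v z u', D (v + z - S.theta) u' =
      S.circ (S.circ (D v u') (D z u')) (D z (D v u')))
    (u : V) :
    (S.theta ∈ {w : V | ∃ v, w = D v u} ∧
      (∀ w₁ ∈ {w : V | ∃ v, w = D v u}, ∀ w₂ ∈ {w : V | ∃ v, w = D v u},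
        S.circ w₁ w₂ ∈ {w : V | ∃ v, w = D v u}) ∧
      (∀ w₁ ∈ {w : V | ∃ v, w = D v u}, S.opp w₁ ∈ {w : V | ∃ v, w = D v u})) ∧
    (∀ z : V, ∀ w₁ ∈ {w : V | ∃ v, w = D v u}, K z w₁ ∈ {w : V | ∃ v, w = D v u}) ∧
    {x : V | ∃ v, x = K v u} = {x : V | ∃ w ∈ {w : V | ∃ v, w = D v u}, x = S.circ u w} := by
  -- `S.circ`, `S.theta`, `S.opp` are `*`, `1`, `⁻¹` definitionally, so the hypotheses feed the
  -- lemmas above unchanged.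
  let _ : CommGroup V := S.toCommGroup
  have hW := setOf_delta_eq_range hKdef hKD hDend u
  refine ⟨⟨?_, ?_, ?_⟩, ?_, ?_⟩
  · rw [hW]; exact one_mem _
  · rw [hW]; exact fun _ h₁ _ h₂ => mul_mem h₁ h₂
  · rw [hW]; exact fun _ h => inv_mem h
  · rw [hW]; exact fun z _ => kappa_mem_range_delta hKdef hKD hDend hDadd u z
  · ext x
    exact ⟨fun ⟨v, hx⟩ => ⟨D v u, ⟨v, rfl⟩, hx.trans (hKD u v)⟩,
      fun ⟨_, ⟨v, rfl⟩, hx⟩ => ⟨v, hx.trans (hKD u v).symm⟩⟩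

/-- Fix `u ∈ V` and let `W = uδ(V) = {uδ(v) : v ∈ V}`. Then `W` is a
`∘`-subgroup of `V`, `W` is invariant under every `κ(z)`, and
`{uκ(v) : v ∈ V}` is the `∘`-coset `u ∘ W`.
Here `D v u` denotes `uδ(v)` and `K y x` denotes `xκ(y)`. -/
theorem stmt14 {p : ℕ} (hp : p.Prime) {V : Type*} [AddCommGroup V] [Fintype V]
    (helem : ∀ v : V, p • v = 0) (S : ElemAbStruct p V)
    (K : V → V → V)
    (hKbij : ∀ y, Function.Bijective (K y))
    (hKlin : ∀ y a b, K y (S.circ a b) = S.circ (K y a) (K y b))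
    (hKdef : ∀ x y, x + y - S.theta = S.circ (K y x) y)
    (D : V → V → V)
    (hKD : ∀ u v, K v u = S.circ u (D v u))
    (hDend : ∀ v a b, D v (S.circ a b) = S.circ (D v a) (D v b))
    (hDadd : ∀ v z u', D (v + z - S.theta) u' =
      S.circ (S.circ (D v u') (D z u')) (D z (D v u')))
    (u : V) :
    (S.theta ∈ {w : V | ∃ v, w = D v u} ∧
      (∀ w₁ ∈ {w : V | ∃ v, w = D v u}, ∀ w₂ ∈ {w : V | ∃ v, w = D v u},
        S.circ w₁ w₂ ∈ {w : V | ∃ v, w = D v u}) ∧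
      (∀ w₁ ∈ {w : V | ∃ v, w = D v u}, S.opp w₁ ∈ {w : V | ∃ v, w = D v u})) ∧
    (∀ z : V, ∀ w₁ ∈ {w : V | ∃ v, w = D v u}, K z w₁ ∈ {w : V | ∃ v, w = D v u}) ∧
    {x : V | ∃ v, x = K v u} = {x : V | ∃ w ∈ {w : V | ∃ v, w = D v u}, x = S.circ u w} :=
  stmt14_general S K hKdef D hKD hDend hDadd u
end

section
/- Let V = V_1 ⊕ ⋯ ⊕ V_n be a direct sum of subgroups of a finite abelian group, γ a bricklayer transformation with bricks γ_i fixing 0, and U, W subgroups of V with Uγ = W. Then for each i, (U ∩ V_i)γ_i = W ∩ V_i. -/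
/-!
A vector lying in a single component `Vᵢ` has all other coordinates `0`, and the bricks fix `0`,
so `γ` acts on it as `γᵢ`. Conversely, if `γ u` lies in `Vᵢ`, then for `j ≠ i` the `j`-th
coordinate `γⱼ(uⱼ)` of `γ u` vanishes, so `uⱼ = 0` by injectivity of `γⱼ` on `Vⱼ`, and `u`
itself lies in `Vᵢ`. Hence `γ` maps `U ∩ Vᵢ` onto `Uγ ∩ Vᵢ`.
-/

open Set

namespace Bricklayer

variable {ι V S : Type*} [Fintype ι] [DecidableEq ι] [AddCommMonoid V] [SetLike S V]
  [AddSubmonoidClass S V] {Vi : ι → S} {π : V → ι → V} {g : ι → V → V}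

def bricklayer (π : V → ι → V) (g : ι → V → V) (v : V) : V :=
  ∑ i, g i (π v i)

theorem proj_eq_single
    (hπuniq : ∀ (v : V) (f : ι → V), (∀ i, f i ∈ Vi i) → v = ∑ i, f i → f = π v)
    {i : ι} {v : V} (hv : v ∈ Vi i) : π v = Pi.single i v := by
  refine (hπuniq v _ (fun j => ?_) ?_).symm
  · rcases eq_or_ne j i with rfl | hj
    · simp [hv]
    · simp [hj, zero_mem (Vi j)]
  · simp [Pi.single_apply]

theorem bricklayer_of_mem
    (hπuniq : ∀ (v : V) (f : ι → V), (∀ i, f i ∈ Vi i) → v = ∑ i, f i → f = π v)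
    (hg0 : ∀ i, g i 0 = 0) {i : ι} {v : V} (hv : v ∈ Vi i) : bricklayer π g v = g i v := by
  rw [bricklayer, proj_eq_single hπuniq hv, Finset.sum_eq_single i]
  · simp
  · intro j _ hj
    simp [hj, hg0]
  · simp

theorem mem_of_bricklayer_mem (hπmem : ∀ v i, π v i ∈ Vi i) (hπsum : ∀ v, v = ∑ i, π v i)
    (hπuniq : ∀ (v : V) (f : ι → V), (∀ i, f i ∈ Vi i) → v = ∑ i, f i → f = π v)
    (hmaps : ∀ i, MapsTo (g i) (Vi i : Set V) (Vi i : Set V))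
    (hinj : ∀ i, InjOn (g i) (Vi i : Set V)) (hg0 : ∀ i, g i 0 = 0)
    {i : ι} {u : V} (h : bricklayer π g u ∈ Vi i) : u ∈ Vi i := by
  have hcoord : (fun j => g j (π u j)) = Pi.single i (bricklayer π g u) :=
    (hπuniq _ _ (fun j => hmaps j (hπmem u j)) rfl).trans (proj_eq_single hπuniq h)
  have hvanish : ∀ j ≠ i, π u j = 0 := fun j hj =>
    hinj j (hπmem u j) (zero_mem (Vi j)) <| by
      simpa [hj, hg0] using congrFun hcoord j
  rw [hπsum u, Finset.sum_eq_single i (fun j _ hj => hvanish j hj) (by simp)]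
  exact hπmem u i

end Bricklayer

open Bricklayer in
theorem stmt19_general {n : ℕ} {V : Type*} [AddCommGroup V]
    (Vi : Fin n → AddSubgroup V)
    (π : V → Fin n → V)
    (hπmem : ∀ v i, π v i ∈ Vi i) (hπsum : ∀ v, v = ∑ i, π v i)
    (hπuniq : ∀ (v : V) (f : Fin n → V), (∀ i, f i ∈ Vi i) → v = ∑ i, f i → f = π v)
    (g : Fin n → V → V)
    (hgbij : ∀ i, Set.BijOn (g i) (Vi i : Set V) (Vi i : Set V))
    (hg0 : ∀ i, g i 0 = 0)
    (U W : AddSubgroup V)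
    (hUW : (fun v => ∑ i, g i (π v i)) '' (U : Set V) = (W : Set V)) :
    ∀ i : Fin n, g i '' ((U : Set V) ∩ (Vi i : Set V)) = (W : Set V) ∩ (Vi i : Set V) := by
  change bricklayer π g '' (U : Set V) = W at hUW
  intro i
  ext w
  constructor
  · rintro ⟨u, ⟨hU, hu⟩, rfl⟩
    have hγ := bricklayer_of_mem hπuniq hg0 hu
    exact ⟨hγ ▸ hUW ▸ mem_image_of_mem _ hU, (hgbij i).mapsTo hu⟩
  · rintro ⟨hW, hw⟩
    obtain ⟨u, hU, rfl⟩ := hUW ▸ hW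
    have hu : u ∈ Vi i := mem_of_bricklayer_mem hπmem hπsum hπuniq
      (fun j => (hgbij j).mapsTo) (fun j => (hgbij j).injOn) hg0 hw
    exact ⟨u, ⟨hU, hu⟩, (bricklayer_of_mem hπuniq hg0 hu).symm⟩

/-- Let `V = V₁ ⊕ ⋯ ⊕ Vₙ`, `γ` a bricklayer transformation with bricks `gᵢ`
permuting `Vᵢ` and fixing `0`, and `U, W` subgroups of `V` with `Uγ = W`. Then
for each `i`, `(U ∩ Vᵢ)γᵢ = W ∩ Vᵢ`. -/
theorem stmt19 {n : ℕ} {V : Type*} [AddCommGroup V] [Fintype V]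
    (Vi : Fin n → AddSubgroup V)
    (π : V → Fin n → V)
    (hπmem : ∀ v i, π v i ∈ Vi i) (hπsum : ∀ v, v = ∑ i, π v i)
    (hπuniq : ∀ (v : V) (f : Fin n → V), (∀ i, f i ∈ Vi i) → v = ∑ i, f i → f = π v)
    (g : Fin n → V → V)
    (hgbij : ∀ i, Set.BijOn (g i) (Vi i : Set V) (Vi i : Set V))
    (hg0 : ∀ i, g i 0 = 0)
    (U W : AddSubgroup V)
    (hUW : (fun v => ∑ i, g i (π v i)) '' (U : Set V) = (W : Set V)) :
    ∀ i : Fin n, g i '' ((U : Set V) ∩ (Vi i : Set V)) = (W : Set V) ∩ (Vi i : Set V) :=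
  stmt19_general Vi π hπmem hπsum hπuniq g hgbij hg0 U W hUW
end
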